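/- arXiv:math/0303133 — 2 statements merged into one kernel-verified Lean document; each statement's English description precedes it below -/
import Mathlib

section
/- Let X be a CAT(0) space and ξ₁, ξ₂ ∈ ∂_∞X. If there exists a point p ∈ X with ∠_p(ξ₁, ξ₂) = ∠_T(ξ₁, ξ₂) < π, then the two rays pξ₁ and pξ₂ bound a flat sector of angle ∠_T(ξ₁, ξ₂): there is an isometric embedding of the Euclidean sector of angle ∠_T(ξ₁,ξ₂) into X whose cone point maps to p and whose two boundary rays map to pξ₁ and pξ₂. -/
open Metric Set Filter MeasureTheory

noncomputable def compAngle {X : Type*} [MetricSpace X] (p a b : X) : ℝ :=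
  Real.arccos ((dist p a ^ 2 + dist p b ^ 2 - dist a b ^ 2) / (2 * dist p a * dist p b))

def IsGeodesicSegment {X : Type*} [MetricSpace X] (f : ℝ → X) (x y : X) : Prop :=
  f 0 = x ∧ f (dist x y) = y ∧
    ∀ s ∈ Set.Icc (0 : ℝ) (dist x y), ∀ t ∈ Set.Icc (0 : ℝ) (dist x y),
      dist (f s) (f t) = |s - t|

def IsGeodesicRay {X : Type*} [MetricSpace X] (c : ℝ → X) : Prop :=
  ∀ s ∈ Set.Ici (0 : ℝ), ∀ t ∈ Set.Ici (0 : ℝ), dist (c s) (c t) = |s - t|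

/-- CAT(0): a complete geodesic space satisfying the CN (Bruhat–Tits) comparison
inequality for midpoints, which is equivalent to the triangle comparison property. -/
def IsCAT0 (X : Type*) [MetricSpace X] : Prop :=
  (∀ x y : X, ∃ f : ℝ → X, IsGeodesicSegment f x y) ∧
  ∀ x y z m : X, dist y m = dist y z / 2 → dist z m = dist y z / 2 →
    dist x m ^ 2 ≤ dist x y ^ 2 / 2 + dist x z ^ 2 / 2 - dist y z ^ 2 / 4

/-- `a` lies on the (unique, in a CAT(0) space) geodesic segment from `p` to `x`. -/
def MetricBetween {X : Type*} [MetricSpace X] (p a x : X) : Prop :=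
  dist p a + dist a x = dist p x

/-- The Alexandrov angle at `p` between the segments `px` and `py`; in a CAT(0) space
the comparison angles are monotone, so the limit equals the infimum. -/
noncomputable def alexAngle {X : Type*} [MetricSpace X] (p x y : X) : ℝ :=
  sInf {θ : ℝ | ∃ a b : X, MetricBetween p a x ∧ MetricBetween p b y ∧
    a ≠ p ∧ b ≠ p ∧ θ = compAngle p a b}

def ConvexSubset {X : Type*} [MetricSpace X] (A : Set X) : Prop :=
  ∀ x ∈ A, ∀ y ∈ A, ∀ f : ℝ → X, IsGeodesicSegment f x y →
    ∀ t ∈ Set.Icc (0 : ℝ) (dist x y), f t ∈ A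

/-- The Euclidean sector of angle `θ` in the plane (modelled by `ℂ`). -/
def euclideanSector (θ : ℝ) : Set ℂ :=
  {z : ℂ | ∃ r : ℝ, 0 ≤ r ∧ ∃ φ : ℝ, 0 ≤ φ ∧ φ ≤ θ ∧
    z = (r : ℂ) * Complex.exp ((φ : ℂ) * Complex.I)}

lemma arccos_anti : Antitone Real.arccos := by
  intro a b h
  simp only [Real.arccos]
  have := Real.monotone_arcsin h
  linarith

lemma cat0_comparison {X : Type*} [MetricSpace X] (hX : IsCAT0 X) {f : ℝ → X} {x y : X}
    (hf : IsGeodesicSegment f x y) (w : X) {s : ℝ} (hs0 : 0 ≤ s) (hs1 : s ≤ 1) :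
    dist w (f (s * dist x y)) ^ 2 ≤
      (1 - s) * dist w x ^ 2 + s * dist w y ^ 2 - s * (1 - s) * dist x y ^ 2 := by
  set d := dist x y with hd
  have hd0 : 0 ≤ d := dist_nonneg
  set F : ℝ → ℝ := fun s => dist w (f (s * d)) ^ 2 -
    ((1 - s) * dist w x ^ 2 + s * dist w y ^ 2 - s * (1 - s) * d ^ 2) with hF
  suffices h : F s ≤ 0 by simpa [hF] using h
  have hmem : ∀ {u : ℝ}, 0 ≤ u → u ≤ 1 → u * d ∈ Set.Icc (0:ℝ) d := by
    intro u h0 h1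
    constructor
    · positivity
    · nlinarith
  -- midpoint inequality
  have hmid : ∀ u v : ℝ, 0 ≤ u → u ≤ 1 → 0 ≤ v → v ≤ 1 →
      F ((u + v) / 2) ≤ (F u + F v) / 2 := by
    intro u v hu0 hu1 hv0 hv1
    have h1 : dist (f (u * d)) (f (((u+v)/2) * d)) = dist (f (u*d)) (f (v*d)) / 2 := by
      rw [hf.2.2 _ (hmem hu0 hu1) _ (hmem (by linarith) (by linarith)),
          hf.2.2 _ (hmem hu0 hu1) _ (hmem hv0 hv1)]
      rw [show u*d - (u+v)/2*d = (u-v)*d/2 by ring, show u*d - v*d = (u-v)*d by ring,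
        abs_div]
      norm_num
    have h2 : dist (f (v * d)) (f (((u+v)/2) * d)) = dist (f (u*d)) (f (v*d)) / 2 := by
      rw [hf.2.2 _ (hmem hv0 hv1) _ (hmem (by linarith) (by linarith)),
          hf.2.2 _ (hmem hu0 hu1) _ (hmem hv0 hv1)]
      rw [show v*d - (u+v)/2*d = (v-u)*d/2 by ring, show u*d - v*d = -((v-u)*d) by ring,
        abs_div, abs_neg]
      norm_num
    have hCN := hX.2 w (f (u*d)) (f (v*d)) (f (((u+v)/2)*d)) h1 h2
    have h3 : dist (f (u*d)) (f (v*d)) = |u - v| * d := by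
      rw [hf.2.2 _ (hmem hu0 hu1) _ (hmem hv0 hv1),
        show u*d - v*d = (u-v)*d by ring, abs_mul, abs_of_nonneg hd0]
    rw [h3] at hCN
    have habs : |u - v| ^ 2 = (u - v) ^ 2 := sq_abs _
    simp only [hF]
    nlinarith [hCN]
  have hF0 : F 0 = 0 := by simp [hF, hf.1]
  have hF1 : F 1 = 0 := by have hfd : f d = y := hf.2.1; simp [hF, hfd]
  -- dyadic points
  have hdyadic : ∀ n : ℕ, ∀ k : ℕ, k ≤ 2 ^ n → F ((k : ℝ) / 2 ^ n) ≤ 0 := by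
    intro n
    induction n with
    | zero =>
      intro k hk
      interval_cases k
      · simpa using hF0.le
      · simpa using hF1.le
    | succ n ih =>
      intro k hk
      rcases Nat.even_or_odd k with ⟨j, hj⟩ | ⟨j, hj⟩
      · have hj' : j ≤ 2 ^ n := by omega
        have : (k : ℝ) / 2 ^ (n+1) = (j : ℝ) / 2 ^ n := by
          subst hj; push_cast; ring
        rw [this]; exact ih j hj'
      · have hj1 : j + 1 ≤ 2 ^ n := by omega
        have hj0 : j ≤ 2 ^ n := by omega
        have hx : (k : ℝ) / 2 ^ (n+1) = ((j : ℝ)/2^n + ((j:ℝ)+1)/2^n) / 2 := by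
          subst hj; push_cast; ring
        have h2n : (0:ℝ) < 2 ^ n := by positivity
        have hu0 : 0 ≤ (j:ℝ)/2^n := by positivity
        have hu1 : (j:ℝ)/2^n ≤ 1 := by
          rw [div_le_one h2n]; exact_mod_cast hj0
        have hv0 : 0 ≤ ((j:ℝ)+1)/2^n := by positivity
        have hv1 : ((j:ℝ)+1)/2^n ≤ 1 := by
          rw [div_le_one h2n]; exact_mod_cast hj1
        have := hmid _ _ hu0 hu1 hv0 hv1
        rw [hx]
        have h1 := ih j hj0
        have h2 := ih (j+1) hj1
        push_cast at h2 ⊢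
        nlinarith
  -- continuity
  have hcont : ContinuousOn F (Set.Icc 0 1) := by
    have hlip : LipschitzOnWith 1 f (Set.Icc 0 d) := by
      intro a ha b hb
      rw [edist_dist, edist_dist, hf.2.2 a ha b hb, Real.dist_eq]
      simp
    have h1 : ContinuousOn (fun u : ℝ => f (u * d)) (Set.Icc 0 1) := by
      apply hlip.continuousOn.comp (Continuous.continuousOn (continuous_mul_right d))
      intro u hu
      exact hmem hu.1 hu.2
    have h2 : ContinuousOn (fun u : ℝ => dist w (f (u * d)) ^ 2) (Set.Icc 0 1) :=
      (((continuous_const.dist continuous_id).comp_continuousOn h1).pow 2)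
    exact h2.sub (Continuous.continuousOn (by fun_prop))
  -- approximate s by dyadics
  have hseq : Filter.Tendsto (fun n : ℕ => ((⌊s * 2 ^ n⌋₊ : ℝ) / 2 ^ n)) atTop (nhds s) := by
    have hlow : ∀ n : ℕ, s - 1 / 2 ^ n ≤ (⌊s * 2 ^ n⌋₊ : ℝ) / 2 ^ n := by
      intro n
      have h2n : (0:ℝ) < 2 ^ n := by positivity
      rw [show s - 1/2^n = (s*2^n - 1)/2^n by field_simp]
      exact (div_le_div_iff_of_pos_right h2n).mpr (by linarith [Nat.lt_floor_add_one (s * 2 ^ n)])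
    have hhigh : ∀ n : ℕ, (⌊s * 2 ^ n⌋₊ : ℝ) / 2 ^ n ≤ s := by
      intro n
      have h2n : (0:ℝ) < 2 ^ n := by positivity
      rw [div_le_iff₀ h2n]
      exact Nat.floor_le (by positivity)
    have htend : Filter.Tendsto (fun n : ℕ => s - 1 / 2 ^ n) atTop (nhds s) := by
      have h12 : Filter.Tendsto (fun n : ℕ => ((1:ℝ)/2) ^ n) atTop (nhds 0) :=
        tendsto_pow_atTop_nhds_zero_of_lt_one (by norm_num) (by norm_num)
      have h12' : Filter.Tendsto (fun n : ℕ => (1:ℝ) / 2 ^ n) atTop (nhds 0) := by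
        simpa [div_pow] using h12
      simpa using (tendsto_const_nhds (x := s)).sub h12'
    exact tendsto_of_tendsto_of_tendsto_of_le_of_le htend tendsto_const_nhds hlow hhigh
  have hkle : ∀ n : ℕ, ⌊s * 2 ^ n⌋₊ ≤ 2 ^ n := by
    intro n
    have : s * 2 ^ n ≤ 2 ^ n := by
      have h2n : (0:ℝ) < 2 ^ n := by positivity
      nlinarith
    calc ⌊s * 2 ^ n⌋₊ ≤ ⌊(2:ℝ) ^ n⌋₊ := Nat.floor_le_floor (by exact_mod_cast this)
    _ = 2 ^ n := by
        rw [show ((2:ℝ)^n) = ((2^n : ℕ) : ℝ) by push_cast; ring, Nat.floor_natCast]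
  have hmem2 : ∀ n : ℕ, ((⌊s * 2 ^ n⌋₊ : ℝ) / 2 ^ n) ∈ Set.Icc (0:ℝ) 1 := by
    intro n
    have h2n : (0:ℝ) < 2 ^ n := by positivity
    constructor
    · positivity
    · rw [div_le_one h2n]; exact_mod_cast hkle n
  have hsm : s ∈ Set.Icc (0:ℝ) 1 := ⟨hs0, hs1⟩
  have : Filter.Tendsto (fun n : ℕ => F ((⌊s * 2 ^ n⌋₊ : ℝ) / 2 ^ n)) atTop (nhds (F s)) := by
    apply ((hcont s hsm).tendsto).comp
    apply tendsto_nhdsWithin_of_tendsto_nhds_of_eventually_within _ hseq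
    exact Filter.Eventually.of_forall hmem2
  apply le_of_tendsto this
  exact Filter.Eventually.of_forall fun n => hdyadic n _ (hkle n)

lemma ray_dist {X : Type*} [MetricSpace X] {c : ℝ → X} (hc : IsGeodesicRay c)
    {s t : ℝ} (hs : 0 ≤ s) (ht : 0 ≤ t) : dist (c s) (c t) = |s - t| :=
  hc s (Set.mem_Ici.mpr hs) t (Set.mem_Ici.mpr ht)

lemma ray_segment {X : Type*} [MetricSpace X] {c : ℝ → X} (hc : IsGeodesicRay c)
    {t : ℝ} (ht : 0 ≤ t) : IsGeodesicSegment c (c 0) (c t) := by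
  have hd : dist (c 0) (c t) = t := by
    rw [ray_dist hc le_rfl ht, abs_of_nonpos (by linarith)]; ring
  refine ⟨rfl, by rw [hd], ?_⟩
  rw [hd]
  intro s hs u hu
  exact ray_dist hc hs.1 hu.1

lemma boundary_dist {X : Type*} [MetricSpace X] (hX : IsCAT0 X)
    (p : X) (c₁ c₂ : ℝ → X) (h₁ : IsGeodesicRay c₁) (h₂ : IsGeodesicRay c₂)
    (e₁ : c₁ 0 = p) (e₂ : c₂ 0 = p) (θ : ℝ)
    (hangle : Filter.Tendsto (fun t => compAngle p (c₁ t) (c₂ t))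
      (nhdsWithin 0 (Set.Ioi 0)) (nhds θ))
    (htits : Filter.Tendsto (fun t => compAngle p (c₁ t) (c₂ t))
      Filter.atTop (nhds θ)) :
    0 ≤ θ ∧ θ ≤ Real.pi ∧ ∀ s t : ℝ, 0 ≤ s → 0 ≤ t →
      dist (c₁ s) (c₂ t) ^ 2 = s ^ 2 + t ^ 2 - 2 * s * t * Real.cos θ := by
  have hd1 : ∀ t : ℝ, 0 ≤ t → dist p (c₁ t) = t := by
    intro t ht
    rw [← e₁, ray_dist h₁ le_rfl ht, abs_of_nonpos (by linarith)]; ring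
  have hd2 : ∀ t : ℝ, 0 ≤ t → dist p (c₂ t) = t := by
    intro t ht
    rw [← e₂, ray_dist h₂ le_rfl ht, abs_of_nonpos (by linarith)]; ring
  have hd1' : ∀ t : ℝ, 0 ≤ t → dist (c₁ t) p = t := fun t ht => by
    rw [dist_comm]; exact hd1 t ht
  have hd2' : ∀ t : ℝ, 0 ≤ t → dist (c₂ t) p = t := fun t ht => by
    rw [dist_comm]; exact hd2 t ht
  -- monotonicity in the second variable
  have monoT : ∀ s t t' : ℝ, 0 ≤ s → 0 < t' → t' ≤ t →
      t' * (s ^ 2 + t ^ 2 - dist (c₁ s) (c₂ t) ^ 2) ≤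
      t * (s ^ 2 + t' ^ 2 - dist (c₁ s) (c₂ t') ^ 2) := by
    intro s t t' hs ht' htt
    have ht : 0 < t := lt_of_lt_of_le ht' htt
    have hseg : IsGeodesicSegment c₂ (c₂ 0) (c₂ t) := ray_segment h₂ ht.le
    rw [e₂] at hseg
    have hcomp := cat0_comparison hX hseg (c₁ s) (s := t'/t)
      (by positivity) (by rw [div_le_one ht]; exact htt)
    rw [hd2 t ht.le, div_mul_cancel₀ _ ht.ne', ← e₂] at hcomp
    rw [show dist (c₁ s) (c₂ 0) = s by rw [e₂, dist_comm]; exact hd1 s hs] at hcomp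
    have h2 := mul_le_mul_of_nonneg_left hcomp ht.le
    have expand : t * ((1 - t'/t) * s^2 + (t'/t) * dist (c₁ s) (c₂ t)^2
        - (t'/t)*(1 - t'/t)*t^2)
        = (t - t')*s^2 + t'*dist (c₁ s) (c₂ t)^2 - t'*(t-t')*t := by
      field_simp
    rw [expand] at h2
    nlinarith [h2]
  -- monotonicity in the first variable
  have monoS : ∀ s s' t : ℝ, 0 ≤ t → 0 < s' → s' ≤ s →
      s' * (s ^ 2 + t ^ 2 - dist (c₁ s) (c₂ t) ^ 2) ≤
      s * (s' ^ 2 + t ^ 2 - dist (c₁ s') (c₂ t) ^ 2) := by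
    intro s s' t htt hs' hss
    have hs : 0 < s := lt_of_lt_of_le hs' hss
    have hseg : IsGeodesicSegment c₁ (c₁ 0) (c₁ s) := ray_segment h₁ hs.le
    rw [e₁] at hseg
    have hcomp := cat0_comparison hX hseg (c₂ t) (s := s'/s)
      (by positivity) (by rw [div_le_one hs]; exact hss)
    rw [hd1 s hs.le, div_mul_cancel₀ _ hs.ne', ← e₁] at hcomp
    rw [show dist (c₂ t) (c₁ 0) = t by rw [e₁, dist_comm]; exact hd2 t htt] at hcomp
    have h2 := mul_le_mul_of_nonneg_left hcomp hs.le
    have expand : s * ((1 - s'/s) * t^2 + (s'/s) * dist (c₂ t) (c₁ s)^2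
        - (s'/s)*(1 - s'/s)*s^2)
        = (s - s')*t^2 + s'*dist (c₂ t) (c₁ s)^2 - s'*(s-s')*s := by
      field_simp
    rw [expand] at h2
    rw [dist_comm (c₂ t) (c₁ s')] at h2
    rw [dist_comm (c₁ s) (c₂ t), dist_comm (c₁ s') (c₂ t)]
    nlinarith [h2]
  -- the comparison-angle function along the diagonal
  have hG : ∀ t : ℝ, 0 < t → compAngle p (c₁ t) (c₂ t)
      = Real.arccos ((t^2 + t^2 - dist (c₁ t) (c₂ t)^2) / (2*t*t)) := by
    intro t ht
    unfold compAngle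
    rw [hd1 t ht.le, hd2 t ht.le]
  have hbound : ∀ t : ℝ, 0 < t →
      -1 ≤ (t^2 + t^2 - dist (c₁ t) (c₂ t)^2) / (2*t*t) ∧
      (t^2 + t^2 - dist (c₁ t) (c₂ t)^2) / (2*t*t) ≤ 1 := by
    intro t ht
    have hDle : dist (c₁ t) (c₂ t) ≤ 2*t := by
      calc dist (c₁ t) (c₂ t) ≤ dist (c₁ t) p + dist p (c₂ t) := dist_triangle _ _ _
      _ = 2*t := by rw [hd1' t ht.le, hd2 t ht.le]; ring
    have hD0 : (0:ℝ) ≤ dist (c₁ t) (c₂ t) := dist_nonneg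
    constructor
    · rw [le_div_iff₀ (by positivity)]
      nlinarith
    · rw [div_le_one (by positivity)]
      nlinarith
  -- G is monotone nondecreasing on (0, ∞)
  have hGmono : ∀ t t' : ℝ, 0 < t' → t' ≤ t →
      compAngle p (c₁ t') (c₂ t') ≤ compAngle p (c₁ t) (c₂ t) := by
    intro t t' ht' htt
    have ht : 0 < t := lt_of_lt_of_le ht' htt
    rw [hG t ht, hG t' ht']
    apply arccos_anti
    have k1 := monoT t' t t' (le_of_lt ht') ht' htt
    have k2 := monoS t t' t ht.le ht' htt
    rw [div_le_div_iff₀ (by positivity) (by positivity)]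
    nlinarith [k1, k2, mul_pos ht' ht]
  -- G t = θ for all t > 0
  have hGeq : ∀ t : ℝ, 0 < t → compAngle p (c₁ t) (c₂ t) = θ := by
    intro t ht
    have hle : compAngle p (c₁ t) (c₂ t) ≤ θ := by
      apply ge_of_tendsto htits
      filter_upwards [Filter.eventually_ge_atTop t] with u hu
      exact hGmono u t ht hu
    have hge : θ ≤ compAngle p (c₁ t) (c₂ t) := by
      apply le_of_tendsto hangle
      filter_upwards [Ioo_mem_nhdsGT_of_mem (Set.mem_Ico.mpr ⟨le_rfl, ht⟩)] with u hu
      exact hGmono t u hu.1 hu.2.le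
    linarith
  have hθ0 : 0 ≤ θ := by
    rw [← hGeq 1 one_pos, hG 1 one_pos]
    exact Real.arccos_nonneg _
  have hθpi : θ ≤ Real.pi := by
    rw [← hGeq 1 one_pos, hG 1 one_pos]
    exact Real.arccos_le_pi _
  -- diagonal distances
  have hdiag : ∀ t : ℝ, 0 < t →
      dist (c₁ t) (c₂ t) ^ 2 = 2*t^2 - 2*t^2*Real.cos θ := by
    intro t ht
    have h := hGeq t ht
    rw [hG t ht] at h
    have hb := hbound t ht
    have := Real.cos_arccos hb.1 hb.2
    rw [h] at this
    have h2t : (0:ℝ) < 2*t*t := by positivity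
    field_simp at this
    nlinarith [this]
  refine ⟨hθ0, hθpi, ?_⟩
  intro s t hs ht
  rcases eq_or_lt_of_le hs with rfl | hs'
  · rw [show dist (c₁ 0) (c₂ t) = t by rw [e₁]; exact hd2 t ht]
    ring
  rcases eq_or_lt_of_le ht with rfl | ht'
  · rw [show dist (c₁ s) (c₂ 0) = s by rw [e₂]; exact hd1' s hs]
    ring
  -- both positive; use monotonicity squeeze
  rcases le_total s t with hst | hts
  · have k1 := monoT s t s hs hs' hst
    have k2 := monoS t s t ht hs' hst
    have d1 := hdiag s hs'
    have d2 := hdiag t ht'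
    nlinarith [k1, k2, d1, d2, hs', ht', mul_pos hs' ht']
  · have k1 := monoS s t t ht ht' hts
    have k2 := monoT s s t hs ht' hts
    have d1 := hdiag s hs'
    have d2 := hdiag t ht'
    nlinarith [k1, k2, d1, d2, hs', ht', mul_pos hs' ht']

noncomputable def cpt (θ : ℝ) (a b : ℝ) : ℂ :=
  (a : ℂ) + (b : ℂ) * Complex.exp ((θ : ℂ) * Complex.I)

lemma sq_inj {a b : ℝ} (ha : 0 ≤ a) (hb : 0 ≤ b) (h : a ^ 2 = b ^ 2) : a = b := by
  rw [← Real.sqrt_sq ha, ← Real.sqrt_sq hb, h]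

lemma le_of_sq_le {a b : ℝ} (ha : 0 ≤ a) (hb : 0 ≤ b) (h : a ^ 2 ≤ b ^ 2) : a ≤ b := by
  nlinarith

lemma cpt_dist (θ a b a' b' : ℝ) :
    dist (cpt θ a b) (cpt θ a' b') =
      Real.sqrt ((a - a')^2 + (b - b')^2 + 2*(a - a')*(b - b')*Real.cos θ) := by
  rw [Complex.dist_eq, Complex.norm_def, Complex.normSq_apply]
  have hre : (cpt θ a b - cpt θ a' b').re = (a - a') + (b - b')*Real.cos θ := by
    simp [cpt, Complex.exp_mul_I, Complex.add_re, Complex.sub_re, Complex.mul_re,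
      Complex.cos_ofReal_re, Complex.sin_ofReal_re]
    ring
  have him : (cpt θ a b - cpt θ a' b').im = (b - b')*Real.sin θ := by
    simp [cpt, Complex.exp_mul_I, Complex.add_im, Complex.sub_im, Complex.mul_im,
      Complex.cos_ofReal_re, Complex.sin_ofReal_re]
    ring
  rw [hre, him]
  congr 1
  linear_combination (b - b')^2 * (Real.sin_sq_add_cos_sq θ)

lemma quad_nonneg {c : ℝ} (hc : -1 ≤ c) (hc' : c ≤ 1) (u v : ℝ) :
    0 ≤ u^2 + v^2 + 2*u*v*c := by
  nlinarith [sq_nonneg (u+v), sq_nonneg (u-v)]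

lemma cpt_dist_sq {θ : ℝ} (a b a' b' : ℝ) :
    dist (cpt θ a b) (cpt θ a' b') ^ 2 =
      (a - a')^2 + (b - b')^2 + 2*(a - a')*(b - b')*Real.cos θ := by
  rw [cpt_dist]
  exact Real.sq_sqrt (quad_nonneg (Real.neg_one_le_cos θ) (Real.cos_le_one θ) _ _)

lemma sqrt_scale {μ M : ℝ} (hμ : 0 ≤ μ) : Real.sqrt (μ^2 * M) = μ * Real.sqrt M := by
  rw [Real.sqrt_mul (sq_nonneg μ), Real.sqrt_sq_eq_abs, abs_of_nonneg hμ]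

/-- key colinear scaling: distance between cpt points whose coordinate difference is a
nonneg multiple of `(u₁, u₂)`. -/
lemma cpt_dist_smul (θ : ℝ) {x y u₁ u₂ μ : ℝ} (hμ : 0 ≤ μ) :
    dist (cpt θ x y) (cpt θ (x + μ*u₁) (y + μ*u₂)) =
      μ * dist (cpt θ x y) (cpt θ (x + u₁) (y + u₂)) := by
  rw [cpt_dist, cpt_dist,
    show (x - (x + μ*u₁))^2 + (y - (y + μ*u₂))^2 + 2*(x - (x + μ*u₁))*(y - (y + μ*u₂))*Real.cos θ
      = μ^2 * ((x - (x + u₁))^2 + (y - (y + u₂))^2 + 2*(x - (x + u₁))*(y - (y + u₂))*Real.cos θ)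
      by ring]
  exact sqrt_scale hμ

lemma quadrant_exit_dir {A B u₁ u₂ : ℝ} (hA : 0 ≤ A) (hB : 0 ≤ B)
    (h : u₂ < 0 ∨ (0 ≤ u₂ ∧ u₁ < 0)) :
    ∃ τ : ℝ, 0 ≤ τ ∧ 0 ≤ A + τ*u₁ ∧ 0 ≤ B + τ*u₂ ∧ (A + τ*u₁ = 0 ∨ B + τ*u₂ = 0) := by
  rcases h with h2 | ⟨h2, h1⟩
  · have hu₂ : (0:ℝ) < -u₂ := by linarith
    set τ₂ := B / (-u₂) with hτ₂
    have hτ₂0 : 0 ≤ τ₂ := div_nonneg hB hu₂.le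
    have hBτ : B + τ₂ * u₂ = 0 := by
      rw [hτ₂]; field_simp; rw [div_self (show u₂ ≠ 0 by linarith)]; ring
    by_cases hA2 : 0 ≤ A + τ₂ * u₁
    · exact ⟨τ₂, hτ₂0, hA2, hBτ.ge, Or.inr hBτ⟩
    · push_neg at hA2
      have h1 : u₁ < 0 := by nlinarith
      have hu₁ : (0:ℝ) < -u₁ := by linarith
      set τ₁ := A / (-u₁) with hτ₁
      have hτ₁0 : 0 ≤ τ₁ := div_nonneg hA hu₁.le
      have hAτ : A + τ₁ * u₁ = 0 := by
        rw [hτ₁]; field_simp; rw [div_self (show u₁ ≠ 0 by linarith)]; ring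
      have hττ : τ₁ ≤ τ₂ := by
        rw [hτ₁, div_le_iff₀ hu₁]
        nlinarith
      refine ⟨τ₁, hτ₁0, hAτ.ge, by nlinarith, Or.inl hAτ⟩
  · have hu₁ : (0:ℝ) < -u₁ := by linarith
    set τ₁ := A / (-u₁) with hτ₁
    have hτ₁0 : 0 ≤ τ₁ := div_nonneg hA hu₁.le
    have hAτ : A + τ₁ * u₁ = 0 := by
      rw [hτ₁]; field_simp; rw [div_self (show u₁ ≠ 0 by linarith)]; ring
    exact ⟨τ₁, hτ₁0, hAτ.ge, by nlinarith, Or.inl hAτ⟩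

lemma quadrant_exit {α β α' β' : ℝ} (hα : 0 ≤ α) (hβ : 0 ≤ β) (hα' : 0 ≤ α') (hβ' : 0 ≤ β')
    (hne : ¬(α = α' ∧ β = β')) :
    ∃ ρ₁ ρ₂ μ : ℝ, 0 ≤ ρ₁ ∧ 0 ≤ ρ₂ ∧ (ρ₁ = 0 ∨ ρ₂ = 0) ∧ 1 ≤ μ ∧
      ((ρ₁ = α + μ*(α'-α) ∧ ρ₂ = β + μ*(β'-β)) ∨
       (ρ₁ = α' + μ*(α-α') ∧ ρ₂ = β' + μ*(β-β'))) := by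
  set u₁ := α' - α with hu₁
  set u₂ := β' - β with hu₂
  by_cases hc : u₂ < 0 ∨ (0 ≤ u₂ ∧ u₁ < 0)
  · obtain ⟨τ, hτ0, e1, e2, e3⟩ := quadrant_exit_dir hα' hβ' hc
    refine ⟨α' + τ*u₁, β' + τ*u₂, 1 + τ, e1, e2, ?_, by linarith, Or.inl ⟨by ring, by ring⟩⟩
    rcases e3 with h | h
    · exact Or.inl h
    · exact Or.inr h
  · push_neg at hc
    have h2 : 0 ≤ u₂ := hc.1
    have h1 : 0 ≤ u₁ := (hc.2 h2)
    have hcond : -u₂ < 0 ∨ (0 ≤ -u₂ ∧ -u₁ < 0) := by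
      rcases lt_or_eq_of_le h2 with h | h
      · exact Or.inl (by linarith)
      · rcases lt_or_eq_of_le h1 with h' | h'
        · exact Or.inr ⟨by linarith, by linarith⟩
        · exact absurd ⟨by linarith, by linarith⟩ hne
    obtain ⟨τ, hτ0, e1, e2, e3⟩ := quadrant_exit_dir hα hβ hcond
    refine ⟨α + τ*(-u₁), β + τ*(-u₂), 1 + τ, e1, e2, ?_, by linarith,
      Or.inr ⟨by ring, by ring⟩⟩
    rcases e3 with h | h
    · exact Or.inl (by linarith [h])
    · exact Or.inr (by linarith [h])

/-- CN extrapolation along a ray: if `dist (c a) x` has the Euclidean value for all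
large `a`, and is dominated by it for all `a`, then it has the Euclidean value
everywhere. -/
lemma cn_extra {X : Type*} [MetricSpace X] (hX : IsCAT0 X) {c : ℝ → X}
    (hc : IsGeodesicRay c) (x : X) (g : ℝ → ℝ) (B C : ℝ)
    (hg : ∀ a, g a = a^2 - 2*a*B + C) {A : ℝ} (hA : 0 ≤ A)
    (hup : ∀ a, 0 ≤ a → dist (c a) x ^ 2 ≤ g a)
    (hex : ∀ a, A ≤ a → dist (c a) x ^ 2 = g a) :
    ∀ a, 0 ≤ a → dist (c a) x ^ 2 = g a := by
  intro a ha
  set m := a + A + 1 with hm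
  set b := a + 2*A + 2 with hb
  have hm0 : (0:ℝ) ≤ m := by linarith
  have hb0 : (0:ℝ) ≤ b := by linarith
  have hab : dist (c a) (c b) = 2*A + 2 := by
    rw [ray_dist hc ha hb0, abs_of_nonpos (by linarith)]; ring
  have ham : dist (c a) (c m) = dist (c a) (c b) / 2 := by
    rw [ray_dist hc ha hm0, abs_of_nonpos (by linarith), hab]; ring
  have hbm : dist (c b) (c m) = dist (c a) (c b) / 2 := by
    rw [ray_dist hc hb0 hm0, abs_of_nonneg (by linarith), hab]; ring
  have hCN := hX.2 x (c a) (c b) (c m) ham hbm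
  rw [hab] at hCN
  rw [dist_comm x (c a), dist_comm x (c b), dist_comm x (c m)] at hCN
  have h1 := hex m (by rw [hm]; linarith)
  have h2 := hex b (by rw [hb]; linarith)
  have h3 := hup a ha
  rw [hg] at h1 h2 h3
  rw [hm] at h1
  rw [hb] at h2 hCN
  rw [hm] at hCN
  rw [hg]
  apply le_antisymm h3
  nlinarith [hCN, h1, h2]

section Exact
variable {X : Type*} [MetricSpace X]

lemma exact_lemma (hX : IsCAT0 X) {p : X} {c₁ c₂ : ℝ → X}
    (h₁ : IsGeodesicRay c₁) (h₂ : IsGeodesicRay c₂)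
    (e₁ : c₁ 0 = p) (e₂ : c₂ 0 = p) {θ : ℝ}
    (hdd : ∀ s t : ℝ, 0 ≤ s → 0 ≤ t →
      dist (c₁ s) (c₂ t) ^ 2 = s^2 + t^2 - 2*s*t*Real.cos θ)
    {γ : ℝ → ℝ → X} (hγ : ∀ t, IsGeodesicSegment (γ t) (c₁ t) (c₂ t))
    (t l : ℝ) (ht : 0 ≤ t) (hl0 : 0 ≤ l) (hl1 : l ≤ 1) :
    (∀ a, 0 ≤ a → dist (c₁ a) (γ t (l * dist (c₁ t) (c₂ t)))
        = dist (cpt θ a 0) (cpt θ (t*(1-l)) (t*l))) ∧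
    (∀ b, 0 ≤ b → dist (c₂ b) (γ t (l * dist (c₁ t) (c₂ t)))
        = dist (cpt θ 0 b) (cpt θ (t*(1-l)) (t*l))) := by
  have hcos1 : Real.cos θ ≤ 1 := Real.cos_le_one θ
  have hcos2 : -1 ≤ Real.cos θ := Real.neg_one_le_cos θ
  have hd11 : ∀ a b : ℝ, 0 ≤ a → 0 ≤ b → dist (c₁ a) (c₁ b) = |a - b| := fun a b ha hb =>
    ray_dist h₁ ha hb
  have hd22 : ∀ a b : ℝ, 0 ≤ a → 0 ≤ b → dist (c₂ a) (c₂ b) = |a - b| := fun a b ha hb =>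
    ray_dist h₂ ha hb
  -- the case t = 0
  rcases eq_or_lt_of_le ht with rfl | ht'
  · have hD : dist (c₁ 0) (c₂ 0) = 0 := by rw [e₁, e₂, dist_self]
    have hQ : γ 0 (l * dist (c₁ 0) (c₂ 0)) = c₁ 0 := by
      rw [hD, mul_zero, (hγ 0).1]
    rw [hQ]
    constructor
    · intro a ha
      rw [hd11 a 0 ha le_rfl, zero_mul, zero_mul, cpt_dist,
        show (a-0)^2 + ((0:ℝ)-0)^2 + 2*(a-0)*((0:ℝ)-0)*Real.cos θ = a^2 by ring,
        Real.sqrt_sq ha, abs_of_nonneg (by linarith)]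
      ring
    · intro b hb
      rw [← e₂, ← e₁] at *
      apply sq_inj dist_nonneg dist_nonneg
      rw [dist_comm (c₂ b) (c₁ 0), hdd 0 b le_rfl hb, zero_mul, zero_mul, cpt_dist_sq]
      ring
  -- the case l = 0
  rcases eq_or_lt_of_le hl0 with rfl | hl0'
  · have hQ : γ t (0 * dist (c₁ t) (c₂ t)) = c₁ t := by rw [zero_mul, (hγ t).1]
    rw [hQ]
    constructor
    · intro a ha
      rw [hd11 a t ha ht, mul_zero, sub_zero, mul_one, cpt_dist,
        show (a-t)^2 + ((0:ℝ)-0)^2 + 2*(a-t)*((0:ℝ)-0)*Real.cos θ = (a-t)^2 by ring,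
        Real.sqrt_sq_eq_abs]
    · intro b hb
      apply sq_inj dist_nonneg dist_nonneg
      rw [dist_comm (c₂ b) (c₁ t), hdd t b ht hb, mul_zero, sub_zero, mul_one, cpt_dist_sq]
      ring
  -- the case l = 1
  rcases eq_or_lt_of_le hl1 with rfl | hl1'
  · have hQ : γ t (1 * dist (c₁ t) (c₂ t)) = c₂ t := by rw [one_mul, (hγ t).2.1]
    rw [hQ]
    constructor
    · intro a ha
      apply sq_inj dist_nonneg dist_nonneg
      rw [hdd a t ha ht, sub_self, mul_zero, mul_one, cpt_dist_sq]
      ring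
    · intro b hb
      rw [hd22 b t hb ht, sub_self, mul_zero, mul_one, cpt_dist,
        show ((0:ℝ)-0)^2 + (b-t)^2 + 2*((0:ℝ)-0)*(b-t)*Real.cos θ = (b-t)^2 by ring,
        Real.sqrt_sq_eq_abs]
  -- main case : 0 < t, 0 < l < 1
  have hA0 : 0 < t*(1-l) := by
    have : 0 < 1 - l := by linarith
    positivity
  have hB0 : 0 < t*l := by positivity
  have hDsq : dist (c₁ t) (c₂ t) ^ 2 = t^2 + t^2 - 2*t*t*Real.cos θ := hdd t t ht ht
  -- squared upper bounds
  have su1 : ∀ a, 0 ≤ a → dist (c₁ a) (γ t (l * dist (c₁ t) (c₂ t))) ^ 2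
      ≤ dist (cpt θ a 0) (cpt θ (t*(1-l)) (t*l)) ^ 2 := by
    intro a ha
    have hcmp := cat0_comparison hX (hγ t) (c₁ a) hl0 hl1
    have h1 : dist (c₁ a) (c₁ t) ^ 2 = (a - t)^2 := by
      rw [hd11 a t ha ht, sq_abs]
    have h2 : dist (c₁ a) (c₂ t) ^ 2 = a^2 + t^2 - 2*a*t*Real.cos θ := hdd a t ha ht
    rw [h1, h2, hDsq] at hcmp
    rw [cpt_dist_sq]
    nlinarith [hcmp]
  have su2 : ∀ b, 0 ≤ b → dist (c₂ b) (γ t (l * dist (c₁ t) (c₂ t))) ^ 2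
      ≤ dist (cpt θ 0 b) (cpt θ (t*(1-l)) (t*l)) ^ 2 := by
    intro b hb
    have hcmp := cat0_comparison hX (hγ t) (c₂ b) hl0 hl1
    have h1 : dist (c₂ b) (c₁ t) ^ 2 = t^2 + b^2 - 2*t*b*Real.cos θ := by
      rw [dist_comm]; exact hdd t b ht hb
    have h2 : dist (c₂ b) (c₂ t) ^ 2 = (b - t)^2 := by
      rw [hd22 b t hb ht, sq_abs]
    rw [h1, h2, hDsq] at hcmp
    rw [cpt_dist_sq]
    nlinarith [hcmp]
  have U1 : ∀ a, 0 ≤ a → dist (c₁ a) (γ t (l * dist (c₁ t) (c₂ t)))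
      ≤ dist (cpt θ a 0) (cpt θ (t*(1-l)) (t*l)) :=
    fun a ha => le_of_sq_le dist_nonneg dist_nonneg (su1 a ha)
  have U2 : ∀ b, 0 ≤ b → dist (c₂ b) (γ t (l * dist (c₁ t) (c₂ t)))
      ≤ dist (cpt θ 0 b) (cpt θ (t*(1-l)) (t*l)) :=
    fun b hb => le_of_sq_le dist_nonneg dist_nonneg (su2 b hb)
  -- the pinching argument
  have PIN : ∀ a b μ : ℝ, 0 ≤ a → 0 ≤ b → 0 ≤ μ → μ ≤ 1 →
      t*(1-l) = (1-μ)*a → t*l = μ*b →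
      dist (c₁ a) (γ t (l * dist (c₁ t) (c₂ t)))
          = dist (cpt θ a 0) (cpt θ (t*(1-l)) (t*l)) ∧
      dist (c₂ b) (γ t (l * dist (c₁ t) (c₂ t)))
          = dist (cpt θ 0 b) (cpt θ (t*(1-l)) (t*l)) := by
    intro a b μ ha hb hμ0 hμ1 hea heb
    have hζ1 : cpt θ (t*(1-l)) (t*l) = cpt θ (a + μ*(0 - a)) (0 + μ*(b - 0)) := by
      rw [hea, heb]; ring_nf
    have hζ2 : cpt θ (t*(1-l)) (t*l) = cpt θ (0 + (1-μ)*(a - 0)) (b + (1-μ)*(0 - b)) := by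
      rw [hea, heb]; ring_nf
    have hgood : cpt θ (a + (0 - a)) (0 + (b - 0)) = cpt θ 0 b := by ring_nf
    have hgood2 : cpt θ (0 + (a - 0)) (b + (0 - b)) = cpt θ a 0 := by ring_nf
    have hs1 : dist (cpt θ a 0) (cpt θ (t*(1-l)) (t*l))
        = μ * dist (cpt θ a 0) (cpt θ 0 b) := by
      rw [hζ1, cpt_dist_smul θ hμ0, hgood]
    have hs2 : dist (cpt θ 0 b) (cpt θ (t*(1-l)) (t*l))
        = (1-μ) * dist (cpt θ 0 b) (cpt θ a 0) := by
      rw [hζ2, cpt_dist_smul θ (by linarith : (0:ℝ) ≤ 1-μ), hgood2]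
    have hEab : dist (c₁ a) (c₂ b) = dist (cpt θ a 0) (cpt θ 0 b) := by
      apply sq_inj dist_nonneg dist_nonneg
      rw [hdd a b ha hb, cpt_dist_sq]
      ring
    have htri := dist_triangle (c₁ a) (γ t (l * dist (c₁ t) (c₂ t))) (c₂ b)
    rw [dist_comm (γ t (l * dist (c₁ t) (c₂ t))) (c₂ b)] at htri
    have hsum : dist (cpt θ a 0) (cpt θ (t*(1-l)) (t*l))
        + dist (cpt θ 0 b) (cpt θ (t*(1-l)) (t*l))
        = dist (cpt θ a 0) (cpt θ 0 b) := by
      rw [hs1, hs2, dist_comm (cpt θ 0 b) (cpt θ a 0)]; ring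
    have hu1 := U1 a ha
    have hu2 := U2 b hb
    rw [hEab] at htri
    constructor <;> linarith
  -- exactness for large parameters along c₁
  have EX1 : ∀ a, t*(1-l) < a → dist (c₁ a) (γ t (l * dist (c₁ t) (c₂ t)))
      = dist (cpt θ a 0) (cpt θ (t*(1-l)) (t*l)) := by
    intro a haa
    have ha0 : 0 < a := lt_trans hA0 haa
    have hμ0 : 0 < (a - t*(1-l))/a := div_pos (by linarith) ha0
    have hμ1 : (a - t*(1-l))/a ≤ 1 := by
      rw [div_le_one ha0]; linarith
    have hb0 : 0 ≤ t*l / ((a - t*(1-l))/a) := le_of_lt (div_pos hB0 hμ0)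
    refine (PIN a (t*l / ((a - t*(1-l))/a)) ((a - t*(1-l))/a) ha0.le hb0 hμ0.le hμ1
      ?_ ?_).1
    · field_simp
      ring
    · rw [mul_div_cancel₀ _ hμ0.ne']
  have EX2 : ∀ b, t*l < b → dist (c₂ b) (γ t (l * dist (c₁ t) (c₂ t)))
      = dist (cpt θ 0 b) (cpt θ (t*(1-l)) (t*l)) := by
    intro b hbb
    have hb0 : 0 < b := lt_trans hB0 hbb
    have hμ0 : 0 < t*l/b := div_pos hB0 hb0
    have hμ1 : t*l/b < 1 := by rw [div_lt_one hb0]; exact hbb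
    have h1μ : 0 < 1 - t*l/b := by linarith
    have ha0 : 0 ≤ t*(1-l) / (1 - t*l/b) := le_of_lt (div_pos hA0 h1μ)
    refine (PIN (t*(1-l) / (1 - t*l/b)) b (t*l/b) ha0 hb0.le hμ0.le hμ1.le ?_ ?_).2
    · rw [mul_div_cancel₀ _ h1μ.ne']
    · rw [mul_comm (t*l/b) b, mul_div_cancel₀ _ hb0.ne']
  -- extrapolate to all parameters
  have A1 : ∀ a, 0 ≤ a → dist (c₁ a) (γ t (l * dist (c₁ t) (c₂ t))) ^ 2
      = dist (cpt θ a 0) (cpt θ (t*(1-l)) (t*l)) ^ 2 := by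
    apply cn_extra hX h₁ _ _ (t*(1-l) + t*l*Real.cos θ)
      ((t*(1-l))^2 + (t*l)^2 + 2*(t*(1-l))*(t*l)*Real.cos θ)
      (fun a => by rw [cpt_dist_sq]; ring) (le_of_lt (by linarith : (0:ℝ) < t*(1-l) + 1))
    · exact su1
    · intro a haA
      rw [EX1 a (by linarith)]
  have A2 : ∀ b, 0 ≤ b → dist (c₂ b) (γ t (l * dist (c₁ t) (c₂ t))) ^ 2
      = dist (cpt θ 0 b) (cpt θ (t*(1-l)) (t*l)) ^ 2 := by
    apply cn_extra hX h₂ _ _ (t*l + t*(1-l)*Real.cos θ)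
      ((t*(1-l))^2 + (t*l)^2 + 2*(t*(1-l))*(t*l)*Real.cos θ)
      (fun b => by rw [cpt_dist_sq]; ring) (le_of_lt (by linarith : (0:ℝ) < t*l + 1))
    · exact su2
    · intro b hbB
      rw [EX2 b (by linarith)]
  exact ⟨fun a ha => sq_inj dist_nonneg dist_nonneg (A1 a ha),
    fun b hb => sq_inj dist_nonneg dist_nonneg (A2 b hb)⟩

end Exact

section Pair
variable {X : Type*} [MetricSpace X]

/-- distances between cpt points only depend on coordinate differences (up to sign). -/
lemma cpt_dist_congr (θ : ℝ) {x y x' y' u v u' v' : ℝ}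
    (h1 : x - x' = u - u') (h2 : y - y' = v - v') :
    dist (cpt θ x y) (cpt θ x' y') = dist (cpt θ u v) (cpt θ u' v') := by
  rw [cpt_dist, cpt_dist]
  congr 1
  rw [h1, h2]

lemma pair_upper (hX : IsCAT0 X) {p : X} {c₁ c₂ : ℝ → X}
    (h₁ : IsGeodesicRay c₁) (h₂ : IsGeodesicRay c₂)
    (e₁ : c₁ 0 = p) (e₂ : c₂ 0 = p) {θ : ℝ}
    (hdd : ∀ s t : ℝ, 0 ≤ s → 0 ≤ t →
      dist (c₁ s) (c₂ t) ^ 2 = s^2 + t^2 - 2*s*t*Real.cos θ)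
    {γ : ℝ → ℝ → X} (hγ : ∀ t, IsGeodesicSegment (γ t) (c₁ t) (c₂ t))
    (t l t' l' : ℝ) (ht : 0 ≤ t) (hl0 : 0 ≤ l) (hl1 : l ≤ 1)
    (ht' : 0 ≤ t') (hl0' : 0 ≤ l') (hl1' : l' ≤ 1) :
    dist (γ t (l * dist (c₁ t) (c₂ t))) (γ t' (l' * dist (c₁ t') (c₂ t')))
      ≤ dist (cpt θ (t*(1-l)) (t*l)) (cpt θ (t'*(1-l')) (t'*l')) := by
  obtain ⟨E1, E2⟩ := exact_lemma hX h₁ h₂ e₁ e₂ hdd hγ t' l' ht' hl0' hl1'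
  have hcmp := cat0_comparison hX (hγ t) (γ t' (l' * dist (c₁ t') (c₂ t'))) hl0 hl1
  have h1 : dist (γ t' (l' * dist (c₁ t') (c₂ t'))) (c₁ t)
      = dist (cpt θ t 0) (cpt θ (t'*(1-l')) (t'*l')) := by
    rw [dist_comm]; exact E1 t ht
  have h2 : dist (γ t' (l' * dist (c₁ t') (c₂ t'))) (c₂ t)
      = dist (cpt θ 0 t) (cpt θ (t'*(1-l')) (t'*l')) := by
    rw [dist_comm]; exact E2 t ht
  rw [h1, h2, hdd t t ht ht] at hcmp
  rw [dist_comm]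
  apply le_of_sq_le dist_nonneg dist_nonneg
  calc dist (γ t' (l' * dist (c₁ t') (c₂ t'))) (γ t (l * dist (c₁ t) (c₂ t))) ^2
      ≤ (1-l) * dist (cpt θ t 0) (cpt θ (t'*(1-l')) (t'*l')) ^2
        + l * dist (cpt θ 0 t) (cpt θ (t'*(1-l')) (t'*l')) ^2
        - l*(1-l)*(t^2 + t^2 - 2*t*t*Real.cos θ) := hcmp
    _ = dist (cpt θ (t'*(1-l')) (t'*l')) (cpt θ (t*(1-l)) (t*l)) ^2 := by
        rw [cpt_dist_sq, cpt_dist_sq, cpt_dist_sq]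
        ring
    _ = dist (cpt θ (t*(1-l)) (t*l)) (cpt θ (t'*(1-l')) (t'*l')) ^2 := by
        rw [dist_comm]

lemma pair_lower_aux (hX : IsCAT0 X) {p : X} {c₁ c₂ : ℝ → X}
    (h₁ : IsGeodesicRay c₁) (h₂ : IsGeodesicRay c₂)
    (e₁ : c₁ 0 = p) (e₂ : c₂ 0 = p) {θ : ℝ}
    (hdd : ∀ s t : ℝ, 0 ≤ s → 0 ≤ t →
      dist (c₁ s) (c₂ t) ^ 2 = s^2 + t^2 - 2*s*t*Real.cos θ)
    {γ : ℝ → ℝ → X} (hγ : ∀ t, IsGeodesicSegment (γ t) (c₁ t) (c₂ t))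
    (t l t' l' : ℝ) (ht : 0 ≤ t) (hl0 : 0 ≤ l) (hl1 : l ≤ 1)
    (ht' : 0 ≤ t') (hl0' : 0 ≤ l') (hl1' : l' ≤ 1)
    {ρ₁ ρ₂ μ : ℝ} (hρ₁0 : 0 ≤ ρ₁) (hρ₂0 : 0 ≤ ρ₂) (h0 : ρ₁ = 0 ∨ ρ₂ = 0) (hμ : 1 ≤ μ)
    (hρ₁ : ρ₁ = t*(1-l) + μ*(t'*(1-l') - t*(1-l)))
    (hρ₂ : ρ₂ = t*l + μ*(t'*l' - t*l)) :
    dist (cpt θ (t*(1-l)) (t*l)) (cpt θ (t'*(1-l')) (t'*l'))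
      ≤ dist (γ t (l * dist (c₁ t) (c₂ t))) (γ t' (l' * dist (c₁ t') (c₂ t'))) := by
  obtain ⟨E1, E2⟩ := exact_lemma hX h₁ h₂ e₁ e₂ hdd hγ t l ht hl0 hl1
  obtain ⟨F1, F2⟩ := exact_lemma hX h₁ h₂ e₁ e₂ hdd hγ t' l' ht' hl0' hl1'
  -- a reference point with exact distances to both chord points
  obtain ⟨R, hR1, hR2⟩ : ∃ R : X,
      dist R (γ t (l * dist (c₁ t) (c₂ t))) = dist (cpt θ ρ₁ ρ₂) (cpt θ (t*(1-l)) (t*l)) ∧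
      dist R (γ t' (l' * dist (c₁ t') (c₂ t')))
        = dist (cpt θ ρ₁ ρ₂) (cpt θ (t'*(1-l')) (t'*l')) := by
    rcases h0 with h | h
    · subst h
      exact ⟨c₂ ρ₂, E2 ρ₂ hρ₂0, F2 ρ₂ hρ₂0⟩
    · subst h
      exact ⟨c₁ ρ₁, E1 ρ₁ hρ₁0, F1 ρ₁ hρ₁0⟩
  -- colinearity
  have hcol1 : dist (cpt θ ρ₁ ρ₂) (cpt θ (t*(1-l)) (t*l))
      = μ * dist (cpt θ (t*(1-l)) (t*l)) (cpt θ (t'*(1-l')) (t'*l')) := by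
    rw [dist_comm (cpt θ ρ₁ ρ₂),
      show cpt θ ρ₁ ρ₂ = cpt θ (t*(1-l) + μ*(t'*(1-l') - t*(1-l))) (t*l + μ*(t'*l' - t*l))
        by rw [hρ₁, hρ₂],
      cpt_dist_smul θ (by linarith : (0:ℝ) ≤ μ)]
    rw [show t*(1-l) + (t'*(1-l') - t*(1-l)) = t'*(1-l') by ring,
      show t*l + (t'*l' - t*l) = t'*l' by ring]
  have hcol2 : dist (cpt θ ρ₁ ρ₂) (cpt θ (t'*(1-l')) (t'*l'))
      = (μ-1) * dist (cpt θ (t*(1-l)) (t*l)) (cpt θ (t'*(1-l')) (t'*l')) := by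
    rw [dist_comm (cpt θ ρ₁ ρ₂),
      show cpt θ ρ₁ ρ₂
          = cpt θ (t'*(1-l') + (μ-1)*(t'*(1-l') - t*(1-l))) (t'*l' + (μ-1)*(t'*l' - t*l))
        by rw [show t'*(1-l') + (μ-1)*(t'*(1-l') - t*(1-l))
              = t*(1-l) + μ*(t'*(1-l') - t*(1-l)) by ring,
            show t'*l' + (μ-1)*(t'*l' - t*l) = t*l + μ*(t'*l' - t*l) by ring,
            hρ₁, hρ₂],
      cpt_dist_smul θ (by linarith : (0:ℝ) ≤ μ-1)]
    congr 1
    exact cpt_dist_congr θ (by ring) (by ring)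
  have htri := dist_triangle R (γ t' (l' * dist (c₁ t') (c₂ t')))
    (γ t (l * dist (c₁ t) (c₂ t)))
  rw [dist_comm (γ t' (l' * dist (c₁ t') (c₂ t'))) (γ t (l * dist (c₁ t) (c₂ t)))] at htri
  rw [hR1, hR2, hcol1, hcol2] at htri
  nlinarith [htri, dist_nonneg (x := γ t (l * dist (c₁ t) (c₂ t)))
    (y := γ t' (l' * dist (c₁ t') (c₂ t')))]

lemma pair_lemma (hX : IsCAT0 X) {p : X} {c₁ c₂ : ℝ → X}
    (h₁ : IsGeodesicRay c₁) (h₂ : IsGeodesicRay c₂)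
    (e₁ : c₁ 0 = p) (e₂ : c₂ 0 = p) {θ : ℝ}
    (hdd : ∀ s t : ℝ, 0 ≤ s → 0 ≤ t →
      dist (c₁ s) (c₂ t) ^ 2 = s^2 + t^2 - 2*s*t*Real.cos θ)
    {γ : ℝ → ℝ → X} (hγ : ∀ t, IsGeodesicSegment (γ t) (c₁ t) (c₂ t))
    (t l t' l' : ℝ) (ht : 0 ≤ t) (hl0 : 0 ≤ l) (hl1 : l ≤ 1)
    (ht' : 0 ≤ t') (hl0' : 0 ≤ l') (hl1' : l' ≤ 1) :
    dist (γ t (l * dist (c₁ t) (c₂ t))) (γ t' (l' * dist (c₁ t') (c₂ t')))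
      = dist (cpt θ (t*(1-l)) (t*l)) (cpt θ (t'*(1-l')) (t'*l')) := by
  have hup := pair_upper hX h₁ h₂ e₁ e₂ hdd hγ t l t' l' ht hl0 hl1 ht' hl0' hl1'
  have hα : 0 ≤ t*(1-l) := by nlinarith
  have hβ : 0 ≤ t*l := by positivity
  have hα' : 0 ≤ t'*(1-l') := by nlinarith
  have hβ' : 0 ≤ t'*l' := by positivity
  by_cases hcase : t*(1-l) = t'*(1-l') ∧ t*l = t'*l'
  · have hζ : cpt θ (t*(1-l)) (t*l) = cpt θ (t'*(1-l')) (t'*l') := by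
      rw [hcase.1, hcase.2]
    rw [hζ] at hup ⊢
    rw [dist_self] at hup ⊢
    exact le_antisymm hup dist_nonneg
  · obtain ⟨ρ₁, ρ₂, μ, hρ₁0, hρ₂0, h0, hμ, hd⟩ := quadrant_exit hα hβ hα' hβ' hcase
    rcases hd with ⟨hd1, hd2⟩ | ⟨hd1, hd2⟩
    · exact le_antisymm hup (pair_lower_aux hX h₁ h₂ e₁ e₂ hdd hγ t l t' l'
        ht hl0 hl1 ht' hl0' hl1' hρ₁0 hρ₂0 h0 hμ hd1 hd2)
    · have hlow := pair_lower_aux hX h₁ h₂ e₁ e₂ hdd hγ t' l' t l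
        ht' hl0' hl1' ht hl0 hl1 hρ₁0 hρ₂0 h0 hμ hd1 hd2
      rw [dist_comm (γ t' (l' * dist (c₁ t') (c₂ t'))),
        dist_comm (cpt θ (t'*(1-l')) (t'*l'))] at hlow
      exact le_antisymm hup hlow

end Pair

/-- Flat Sector Lemma: if the angle at `p` between the rays `pξ₁`, `pξ₂` equals
the Tits angle `θ < π`, then the two rays bound a flat sector of angle `θ`:
there is an isometric embedding of the Euclidean sector of angle `θ` sending the
cone point to `p` and the two boundary rays onto the two geodesic rays. -/
theorem stmt_14 {X : Type*} [MetricSpace X] [CompleteSpace X] (hX : IsCAT0 X)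
    (p : X) (c₁ c₂ : ℝ → X) (h₁ : IsGeodesicRay c₁) (h₂ : IsGeodesicRay c₂)
    (e₁ : c₁ 0 = p) (e₂ : c₂ 0 = p) (θ : ℝ) (hθ : θ < Real.pi)
    (hangle : Filter.Tendsto (fun t => compAngle p (c₁ t) (c₂ t))
      (nhdsWithin 0 (Set.Ioi 0)) (nhds θ))
    (htits : Filter.Tendsto (fun t => compAngle p (c₁ t) (c₂ t))
      Filter.atTop (nhds θ)) :
    ∃ f : ℂ → X,
      (∀ z ∈ euclideanSector θ, ∀ w ∈ euclideanSector θ, dist (f z) (f w) = dist z w) ∧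
      f 0 = p ∧
      (∀ t : ℝ, 0 ≤ t → f ((t : ℂ)) = c₁ t ∧
        f ((t : ℂ) * Complex.exp ((θ : ℂ) * Complex.I)) = c₂ t) := by
  obtain ⟨hθ0, hθpi, hdd⟩ := boundary_dist hX p c₁ c₂ h₁ h₂ e₁ e₂ θ hangle htits
  rcases eq_or_lt_of_le hθ0 with hθz | hθpos
  · -- θ = 0 : the two rays coincide
    have hc12 : ∀ t : ℝ, 0 ≤ t → c₂ t = c₁ t := by
      intro t ht
      have h := hdd t t ht ht
      rw [← hθz, Real.cos_zero] at h
      have : dist (c₁ t) (c₂ t) = 0 := by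
        have hd0 : (0:ℝ) ≤ dist (c₁ t) (c₂ t) := dist_nonneg
        nlinarith
      rw [dist_eq_zero] at this
      exact this.symm
    refine ⟨fun z => c₁ z.re, ?_, ?_, ?_⟩
    · rintro z ⟨r, hr, φ, hφ0, hφ1, rfl⟩ w ⟨r', hr', φ', hφ0', hφ1', rfl⟩
      rw [← hθz] at hφ1 hφ1'
      have hφ : φ = 0 := le_antisymm hφ1 hφ0
      have hφ' : φ' = 0 := le_antisymm hφ1' hφ0'
      subst hφ; subst hφ'
      simp only [Complex.ofReal_zero, zero_mul, Complex.exp_zero, mul_one]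
      rw [show ((r:ℂ)).re = r from Complex.ofReal_re r,
        show ((r':ℂ)).re = r' from Complex.ofReal_re r']
      rw [ray_dist h₁ hr hr', Complex.dist_eq, ← Complex.ofReal_sub, Complex.norm_real, Real.norm_eq_abs]
    · simpa using e₁
    · intro t ht
      constructor
      · simp
      · rw [← hθz]
        simp only [Complex.ofReal_zero, zero_mul, Complex.exp_zero, mul_one,
          Complex.ofReal_re]
        exact (hc12 t ht).symm
  · -- 0 < θ < π
    have hsθ : 0 < Real.sin θ := Real.sin_pos_of_pos_of_lt_pi hθpos hθ
    choose γ hγ using fun t => hX.1 (c₁ t) (c₂ t)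
    have hexp_re : (Complex.exp ((θ:ℂ) * Complex.I)).re = Real.cos θ := by
      simp [Complex.exp_mul_I, Complex.cos_ofReal_re, Complex.sin_ofReal_re]
    have hexp_im : (Complex.exp ((θ:ℂ) * Complex.I)).im = Real.sin θ := by
      simp [Complex.exp_mul_I, Complex.cos_ofReal_re, Complex.sin_ofReal_re]
    set A : ℂ → ℝ := fun z => z.re - z.im * Real.cos θ / Real.sin θ with hAdef
    set B : ℂ → ℝ := fun z => z.im / Real.sin θ with hBdef
    have hrep : ∀ z : ℂ, cpt θ (A z) (B z) = z := by
      intro z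
      apply Complex.ext
      · simp only [cpt, Complex.add_re, Complex.ofReal_re, Complex.mul_re,
          Complex.ofReal_im, hexp_re, hexp_im, hAdef, hBdef]
        field_simp
        ring
      · simp only [cpt, Complex.add_im, Complex.ofReal_im, Complex.mul_im,
          Complex.ofReal_re, hexp_re, hexp_im, hAdef, hBdef]
        field_simp
        ring
    -- nonnegativity of the coordinates on the sector
    have hsecAB : ∀ z ∈ euclideanSector θ, 0 ≤ A z ∧ 0 ≤ B z := by
      rintro z ⟨r, hr, φ, hφ0, hφ1, rfl⟩
      have hre : ((r:ℂ) * Complex.exp ((φ:ℂ) * Complex.I)).re = r * Real.cos φ := by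
        simp [Complex.exp_mul_I, Complex.cos_ofReal_re, Complex.sin_ofReal_re,
          Complex.mul_re]
      have him : ((r:ℂ) * Complex.exp ((φ:ℂ) * Complex.I)).im = r * Real.sin φ := by
        simp [Complex.exp_mul_I, Complex.cos_ofReal_re, Complex.sin_ofReal_re,
          Complex.mul_im]
      have hsφ : 0 ≤ Real.sin φ :=
        Real.sin_nonneg_of_nonneg_of_le_pi hφ0 (by linarith)
      have hsθφ : 0 ≤ Real.sin (θ - φ) :=
        Real.sin_nonneg_of_nonneg_of_le_pi (by linarith) (by linarith)
      constructor
      · simp only [hAdef, hre, him]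
        have key : 0 ≤ r * (Real.sin θ * Real.cos φ - Real.cos θ * Real.sin φ) := by
          rw [← Real.sin_sub]; exact mul_nonneg hr hsθφ
        rw [sub_nonneg, div_le_iff₀ hsθ]
        nlinarith [key]
      · simp only [hBdef, him]
        positivity
    -- parameters of the sector point
    have hL0 : ∀ z : ℂ, 0 ≤ A z → 0 ≤ B z →
        0 ≤ (if A z + B z = 0 then (0:ℝ) else B z / (A z + B z)) := by
      intro z hA hB
      split
      · exact le_rfl
      · rename_i h
        have : 0 < A z + B z := lt_of_le_of_ne (by linarith) (Ne.symm h)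
        positivity
    have hL1 : ∀ z : ℂ, 0 ≤ A z → 0 ≤ B z →
        (if A z + B z = 0 then (0:ℝ) else B z / (A z + B z)) ≤ 1 := by
      intro z hA hB
      split
      · norm_num
      · rename_i h
        have hpos : 0 < A z + B z := lt_of_le_of_ne (by linarith) (Ne.symm h)
        rw [div_le_one hpos]
        linarith
    have hcoord : ∀ z : ℂ, 0 ≤ A z → 0 ≤ B z →
        (A z + B z) * (1 - (if A z + B z = 0 then (0:ℝ) else B z / (A z + B z))) = A z ∧
        (A z + B z) * (if A z + B z = 0 then (0:ℝ) else B z / (A z + B z)) = B z := by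
      intro z hA hB
      split
      · rename_i h
        have hA0 : A z = 0 := by linarith
        have hB0 : B z = 0 := by linarith
        rw [hA0, hB0]
        norm_num
      · rename_i h
        constructor
        · field_simp
          ring
        · field_simp
    have hζ : ∀ z : ℂ, 0 ≤ A z → 0 ≤ B z →
        cpt θ ((A z + B z) * (1 - (if A z + B z = 0 then (0:ℝ) else B z / (A z + B z))))
          ((A z + B z) * (if A z + B z = 0 then (0:ℝ) else B z / (A z + B z))) = z := by
      intro z hA hB
      rw [(hcoord z hA hB).1, (hcoord z hA hB).2]
      exact hrep z
    refine ⟨fun z => γ (A z + B z)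
      ((if A z + B z = 0 then (0:ℝ) else B z / (A z + B z))
        * dist (c₁ (A z + B z)) (c₂ (A z + B z))), ?_, ?_, ?_⟩
    · -- isometry on the sector
      intro z hz w hw
      obtain ⟨hAz, hBz⟩ := hsecAB z hz
      obtain ⟨hAw, hBw⟩ := hsecAB w hw
      rw [pair_lemma hX h₁ h₂ e₁ e₂ hdd hγ (A z + B z) _ (A w + B w) _
        (by linarith) (hL0 z hAz hBz) (hL1 z hAz hBz)
        (by linarith) (hL0 w hAw hBw) (hL1 w hAw hBw),
        hζ z hAz hBz, hζ w hAw hBw]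
    · -- the cone point
      have hA0 : A 0 = 0 := by simp [hAdef]
      have hB0 : B 0 = 0 := by simp [hBdef]
      show γ (A 0 + B 0) _ = p
      rw [hA0, hB0]
      norm_num
      rw [(hγ 0).1, e₁]
    · -- the boundary rays
      intro t ht
      constructor
      · have hA1 : A ((t:ℂ)) = t := by simp [hAdef]
        have hB1 : B ((t:ℂ)) = 0 := by simp [hBdef]
        show γ (A _ + B _) _ = c₁ t
        rw [hA1, hB1, add_zero]
        have hL : (if t = (0:ℝ) then (0:ℝ) else 0 / t) = 0 := by
          split <;> simp
        rw [hL, zero_mul, (hγ t).1]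
      · have hre2 : ((t:ℂ) * Complex.exp ((θ:ℂ) * Complex.I)).re = t * Real.cos θ := by
          simp [Complex.mul_re, hexp_re, hexp_im]
        have him2 : ((t:ℂ) * Complex.exp ((θ:ℂ) * Complex.I)).im = t * Real.sin θ := by
          simp [Complex.mul_im, hexp_re, hexp_im]
        have hA2 : A ((t:ℂ) * Complex.exp ((θ:ℂ) * Complex.I)) = 0 := by
          simp only [hAdef, hre2, him2]
          field_simp
          ring
        have hB2 : B ((t:ℂ) * Complex.exp ((θ:ℂ) * Complex.I)) = t := by
          simp only [hBdef, him2]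
          field_simp
        show γ (A _ + B _) _ = c₂ t
        rw [hA2, hB2, zero_add]
        rcases eq_or_lt_of_le ht with rfl | ht'
        · have h00 : dist (c₁ 0) (c₂ 0) = 0 := by rw [e₁, e₂, dist_self]
          rw [if_pos rfl, zero_mul, (hγ 0).1, e₁, ← e₂]
        · have hne : t ≠ 0 := ne_of_gt ht'
          rw [if_neg hne, div_self hne, one_mul, (hγ t).2.1]
end

section
/- Let X be a CAT(0) space, let c₁ : ℝ → X and c₂ : ℝ → X be geodesic lines, and let g₁, g₂ be isometries of X with g₁(c₁(t)) = c₁(t+a) and g₂(c₂(t)) = c₂(t+b) for all t ∈ ℝ, where a, b > 0. Let π₁, π₂ be the orthogonal projections onto c₁(ℝ) and c₂(ℝ), and set X₁ = π₁⁻¹(c₁((−∞,0] ∪ [a,∞))), X₂ = π₂⁻¹(c₂((−∞,0] ∪ [b,∞))). If X₁ ∩ X₂ = ∅, then g₁ and g₂ generate a free group of rank two. -/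
open Metric Set Filter MeasureTheory

/-!
Project every point onto each axis and read off its coordinate `τᵢ` along the axis. In a CAT(0)
space nearest points on a geodesic line are unique (the CN inequality at the midpoint of two of
them), so `τᵢ` is well defined and `gᵢ` shifts it by its translation length `ℓᵢ`. Hence `gᵢ`
throws the complement of `{τᵢ ≤ 0}` into `{τᵢ ≥ ℓᵢ}` and `gᵢ⁻¹` throws the complement of
`{τᵢ ≥ ℓᵢ}` into `{τᵢ ≤ 0}`; the disjointness hypothesis makes these four sets a ping-pong table.
-/

open Function

namespace IsometryEquiv

instance applyMulAction {α : Type*} [MetricSpace α] : MulAction (α ≃ᵢ α) α where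
  smul g x := g x
  one_smul _ := rfl
  mul_smul _ _ _ := rfl

end IsometryEquiv

universe u v

namespace FreeGroup

open scoped Pointwise

/-- `FreeGroup.injective_lift_of_ping_pong` for an index type in a smaller universe than the
group. -/
theorem injective_lift_of_ping_pong' {ι : Type u} {G : Type max u v} {α : Type*} [Nontrivial ι]
    [Group G] [MulAction G α]
    (g : ι → G) (X Y : ι → Set α) (hXne : ∀ i, (X i).Nonempty)
    (hXdisj : Pairwise (Disjoint on X)) (hYdisj : Pairwise (Disjoint on Y))
    (hXYdisj : ∀ i j, Disjoint (X i) (Y j)) (hX : ∀ i, g i • (Y i)ᶜ ⊆ X i)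
    (hY : ∀ i, (g i)⁻¹ • (X i)ᶜ ⊆ Y i) :
    Injective (FreeGroup.lift g) := by
  have hlift : FreeGroup.lift g = (FreeGroup.lift (g ∘ ULift.down.{v})).comp
      (freeGroupCongr Equiv.ulift.symm).toMonoidHom := by
    ext; simp
  rw [hlift, MonoidHom.coe_comp]
  refine Injective.comp ?_ (freeGroupCongr _).injective
  have hdown : Pairwise fun i j : ULift ι => i.down ≠ j.down := fun _ _ => ULift.down_injective.ne
  exact injective_lift_of_ping_pong _ (X ∘ ULift.down) (Y ∘ ULift.down) (fun i => hXne i.down)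
    (hdown.mono fun _ _ => (hXdisj ·)) (hdown.mono fun _ _ => (hYdisj ·))
    (fun i j => hXYdisj i.down j.down) (fun i => hX i.down) (fun i => hY i.down)

theorem injective_lift_of_translations {ι : Type u} {G : Type max u v} {α : Type*} [Nontrivial ι]
    [Group G] [MulAction G α]
    (g : ι → G) (τ : ι → α → ℝ) (ℓ : ι → ℝ) (hℓ : ∀ i, 0 < ℓ i)
    (hτ : ∀ i x, τ i (g i • x) = τ i x + ℓ i) (hne : ∀ i, ∃ x, ℓ i ≤ τ i x)
    (hdisj : Pairwise fun i j =>
      Disjoint {x | τ i x ≤ 0 ∨ ℓ i ≤ τ i x} {x | τ j x ≤ 0 ∨ ℓ j ≤ τ j x}) :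
    Injective (FreeGroup.lift g) := by
  have hτinv : ∀ i x, τ i ((g i)⁻¹ • x) = τ i x - ℓ i := fun i x => by
    rw [eq_sub_iff_add_eq, ← hτ, smul_inv_smul]
  refine injective_lift_of_ping_pong' g (fun i => {x | ℓ i ≤ τ i x}) (fun i => {x | τ i x ≤ 0})
    hne (fun i j hij => (hdisj hij).mono (fun _ => .inr) (fun _ => .inr))
    (fun i j hij => (hdisj hij).mono (fun _ => .inl) (fun _ => .inl)) (fun i j => ?_) ?_ ?_
  · rcases eq_or_ne i j with rfl | hij
    · exact disjoint_left.2 fun x hℓx hx0 => (hℓ i).not_ge (hℓx.trans hx0)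
    · exact (hdisj hij).mono (fun _ => .inr) (fun _ => .inl)
  · refine fun i => smul_set_subset_iff.2 fun x hx => ?_
    have : 0 < τ i x := not_le.1 hx
    show ℓ i ≤ τ i (g i • x)
    linarith [hτ i x]
  · refine fun i => smul_set_subset_iff.2 fun x hx => ?_
    have : τ i x < ℓ i := not_le.1 hx
    show τ i ((g i)⁻¹ • x) ≤ 0
    linarith [hτinv i x]

end FreeGroup

section NearestParam

variable {X : Type*} [MetricSpace X] {c : ℝ → X} {x : X} {s u a : ℝ}

def IsNearestParam (c : ℝ → X) (x : X) (s : ℝ) : Prop :=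
  ∀ t, dist x (c s) ≤ dist x (c t)

theorem isNearestParam_self (s : ℝ) : IsNearestParam c (c s) s := fun _ => by
  rw [dist_self]; exact dist_nonneg

theorem IsNearestParam.map {g : X → X} (hg : Isometry g) (hgc : ∀ t, g (c t) = c (t + a))
    (h : IsNearestParam c x s) : IsNearestParam c (g x) (s + a) := fun t => by
  rw [← hgc, ← sub_add_cancel t a, ← hgc, hg.dist_eq, hg.dist_eq]
  exact h _

/-- The CN inequality at the midpoint of two nearest points forces them to coincide. -/
theorem IsNearestParam.unique (hX : IsCAT0 X) (hc : Isometry c) (hs : IsNearestParam c x s)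
    (hu : IsNearestParam c x u) : s = u := by
  set m := (s + u) / 2
  have hsm : dist (c s) (c m) = dist (c s) (c u) / 2 := by
    simp only [hc.dist_eq, Real.dist_eq, m]
    rw [show s - (s + u) / 2 = (s - u) / 2 by ring, abs_div, abs_two]
  have hum : dist (c u) (c m) = dist (c s) (c u) / 2 := by
    simp only [hc.dist_eq, Real.dist_eq, m]
    rw [show u - (s + u) / 2 = -((s - u) / 2) by ring, abs_neg, abs_div, abs_two]
  have hcn := hX.2 x _ _ _ hsm hum
  have hxs : dist x (c s) ≤ dist x (c m) := hs m
  have hsu : dist x (c s) = dist x (c u) := (hs u).antisymm (hu s)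
  have : dist s u = 0 := by
    rw [← hc.dist_eq]
    nlinarith [dist_nonneg (x := c s) (y := c u), dist_nonneg (x := x) (y := c s)]
  exact dist_eq_zero.1 this

theorem IsCAT0.exists_lineCoord (hX : IsCAT0 X) (hc : Isometry c) {proj : X → X}
    (hproj : ∀ x, (∃ t, proj x = c t) ∧ ∀ t, dist x (proj x) ≤ dist x (c t)) :
    ∃ τ : X → ℝ, (∀ x, proj x = c (τ x)) ∧ (∀ s, τ (c s) = s) ∧
      ∀ {g : X → X} {a : ℝ}, Isometry g → (∀ t, g (c t) = c (t + a)) →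
        ∀ x, τ (g x) = τ x + a := by
  choose τ hτ using fun x => (hproj x).1
  have hnear : ∀ x, IsNearestParam c x (τ x) := fun x t => hτ x ▸ (hproj x).2 t
  exact ⟨τ, hτ, fun s => (hnear (c s)).unique hX hc (isNearestParam_self s),
    fun hg hgc x => (hnear _).unique hX hc ((hnear x).map hg hgc)⟩

end NearestParam

theorem stmt_16_general {X : Type*} [MetricSpace X] (hX : IsCAT0 X)
    (c₁ c₂ : ℝ → X)
    (h₁ : ∀ s t : ℝ, dist (c₁ s) (c₁ t) = |s - t|)
    (h₂ : ∀ s t : ℝ, dist (c₂ s) (c₂ t) = |s - t|)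
    (g₁ g₂ : X ≃ᵢ X) (a b : ℝ) (ha : 0 < a) (hb : 0 < b)
    (hg₁ : ∀ t : ℝ, g₁ (c₁ t) = c₁ (t + a))
    (hg₂ : ∀ t : ℝ, g₂ (c₂ t) = c₂ (t + b))
    (proj₁ proj₂ : X → X)
    (hproj₁ : ∀ x : X, (∃ t : ℝ, proj₁ x = c₁ t) ∧ ∀ t : ℝ, dist x (proj₁ x) ≤ dist x (c₁ t))
    (hproj₂ : ∀ x : X, (∃ t : ℝ, proj₂ x = c₂ t) ∧ ∀ t : ℝ, dist x (proj₂ x) ≤ dist x (c₂ t))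
    (hdisj : {x : X | ∃ t : ℝ, proj₁ x = c₁ t ∧ (t ≤ 0 ∨ a ≤ t)} ∩
             {x : X | ∃ t : ℝ, proj₂ x = c₂ t ∧ (t ≤ 0 ∨ b ≤ t)} = ∅) :
    Function.Injective
      ⇑(FreeGroup.lift (fun i : Bool => if i then g₁ else g₂)) := by
  have hc₁ : Isometry c₁ := .of_dist_eq fun s t => (h₁ s t).trans (Real.dist_eq s t).symm
  have hc₂ : Isometry c₂ := .of_dist_eq fun s t => (h₂ s t).trans (Real.dist_eq s t).symm
  obtain ⟨τ₁, hτ₁p, hτ₁c, hτ₁g⟩ := hX.exists_lineCoord hc₁ hproj₁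
  obtain ⟨τ₂, hτ₂p, hτ₂c, hτ₂g⟩ := hX.exists_lineCoord hc₂ hproj₂
  have hout : Disjoint {x | τ₁ x ≤ 0 ∨ a ≤ τ₁ x} {x | τ₂ x ≤ 0 ∨ b ≤ τ₂ x} :=
    disjoint_left.2 fun x hx₁ hx₂ =>
      eq_empty_iff_forall_notMem.1 hdisj x ⟨⟨_, hτ₁p x, hx₁⟩, _, hτ₂p x, hx₂⟩
  refine FreeGroup.injective_lift_of_translations _ (fun i => if i then τ₁ else τ₂)
    (fun i => if i then a else b) (by simp [ha, hb]) ?_ ?_ ?_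
  · rintro (_ | _) x
    exacts [hτ₂g g₂.isometry hg₂ x, hτ₁g g₁.isometry hg₁ x]
  · rintro (_ | _)
    · exact ⟨c₂ b, (hτ₂c b).ge⟩
    · exact ⟨c₁ a, (hτ₁c a).ge⟩
  · rintro (_ | _) (_ | _) hij
    exacts [absurd rfl hij, hout.symm, hout, absurd rfl hij]

/-- Geometric Ping-Pong (Lemma 5.3): if the two "outer" preimage sets of the
axis projections are disjoint, then the two hyperbolic isometries generate a free
group of rank two (the lift from the free group on two generators is injective). -/
theorem stmt_16 {X : Type*} [MetricSpace X] [CompleteSpace X] (hX : IsCAT0 X)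
    (c₁ c₂ : ℝ → X)
    (h₁ : ∀ s t : ℝ, dist (c₁ s) (c₁ t) = |s - t|)
    (h₂ : ∀ s t : ℝ, dist (c₂ s) (c₂ t) = |s - t|)
    (g₁ g₂ : X ≃ᵢ X) (a b : ℝ) (ha : 0 < a) (hb : 0 < b)
    (hg₁ : ∀ t : ℝ, g₁ (c₁ t) = c₁ (t + a))
    (hg₂ : ∀ t : ℝ, g₂ (c₂ t) = c₂ (t + b))
    (proj₁ proj₂ : X → X)
    (hproj₁ : ∀ x : X, (∃ t : ℝ, proj₁ x = c₁ t) ∧ ∀ t : ℝ, dist x (proj₁ x) ≤ dist x (c₁ t))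
    (hproj₂ : ∀ x : X, (∃ t : ℝ, proj₂ x = c₂ t) ∧ ∀ t : ℝ, dist x (proj₂ x) ≤ dist x (c₂ t))
    (hdisj : {x : X | ∃ t : ℝ, proj₁ x = c₁ t ∧ (t ≤ 0 ∨ a ≤ t)} ∩
             {x : X | ∃ t : ℝ, proj₂ x = c₂ t ∧ (t ≤ 0 ∨ b ≤ t)} = ∅) :
    Function.Injective
      ⇑(FreeGroup.lift (fun i : Bool => if i then g₁ else g₂)) :=
  stmt_16_general hX c₁ c₂ h₁ h₂ g₁ g₂ a b ha hb hg₁ hg₂ proj₁ proj₂ hproj₁ hproj₂ hdisj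
end
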